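/- arXiv:2305.07165 — 3 statements merged into one kernel-verified Lean document; each statement's English description precedes it below -/
import Mathlib

section
/- For real x with |x| ≤ R√δ where 0 < R < 2π/h and δ > 0, the aliasing error E_A = ∑_{n ∈ ℤ, n ≠ 0} e^{-(x + 2πn√δ/h)²/δ} satisfies E_A ≤ 2 e^{-(2π/h - R)²} / (1 - e^{-(4π/h)(2π/h - R)}). -/
/-- Bound on the aliasing error: for `|x| ≤ R√δ` with `0 < R < 2π/h`,
`∑_{n ≠ 0} e^{-(x + 2πn√δ/h)²/δ} ≤ 2 e^{-(2π/h - R)²} / (1 - e^{-(4π/h)(2π/h - R)})`. -/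
theorem aliasing_error_bound (δ h R x : ℝ)
    (hδ : 0 < δ) (hh : 0 < h) (hR : 0 < R) (hRh : R < 2 * Real.pi / h)
    (hx : |x| ≤ R * Real.sqrt δ) :
    ∑' n : {n : ℤ // n ≠ 0},
        Real.exp (-(x + 2 * Real.pi * (n : ℤ) * Real.sqrt δ / h) ^ 2 / δ) ≤
      2 * Real.exp (-(2 * Real.pi / h - R) ^ 2) /
        (1 - Real.exp (-(4 * Real.pi / h) * (2 * Real.pi / h - R))) := by
  set c : ℝ := 2 * Real.pi / h with hc
  set a : ℝ := c - R with ha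
  have hc0 : 0 < c := lt_trans hR hRh
  have ha0 : 0 < a := sub_pos.mpr hRh
  set r : ℝ := Real.exp (-(2 * c * a)) with hr
  have hr0 : 0 < r := Real.exp_pos _
  have hr1 : r < 1 := by
    rw [hr]
    apply Real.exp_lt_one_iff.mpr
    nlinarith
  have hs : 0 < Real.sqrt δ := Real.sqrt_pos.mpr hδ
  have hs2 : Real.sqrt δ ^ 2 = δ := Real.sq_sqrt hδ.le
  -- the majorant on ℤ
  set G : ℤ → ℝ := fun n => if n = 0 then 0 else Real.exp (-a ^ 2) * r ^ (n.natAbs - 1)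
    with hG
  -- pointwise bound
  have key : ∀ n : ℤ, n ≠ 0 →
      Real.exp (-(x + 2 * Real.pi * (n : ℤ) * Real.sqrt δ / h) ^ 2 / δ) ≤
        Real.exp (-a ^ 2) * r ^ (n.natAbs - 1) := by
    intro n hn
    set m : ℕ := n.natAbs - 1 with hm
    have hnabs : (n.natAbs : ℝ) = (m : ℝ) + 1 := by
      have : n.natAbs = m + 1 := by omega
      rw [this]; push_cast; ring
    have habs : |(n : ℝ)| = (m : ℝ) + 1 := by
      have h5 : n.natAbs = m + 1 := by omega
      rw [← Int.cast_abs, Int.abs_eq_natAbs, h5]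
      push_cast
      ring
    set t : ℝ := 2 * Real.pi * (n : ℤ) * Real.sqrt δ / h with ht
    have htabs : |t| = ((m : ℝ) + 1) * (c * Real.sqrt δ) := by
      have : t = (n : ℝ) * (c * Real.sqrt δ) := by rw [ht, hc]; ring
      rw [this, abs_mul, habs, abs_of_pos (by positivity)]
    -- lower bound |x + t|
    have h1 : (a + (m : ℝ) * c) * Real.sqrt δ ≤ |x + t| := by
      have h2 : |t| - |x| ≤ |x + t| := by
        have := abs_sub_abs_le_abs_sub t (-x)
        simp only [abs_neg, sub_neg_eq_add] at this
        calc |t| - |x| ≤ |t + x| := this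
          _ = |x + t| := by rw [add_comm]
      have h3 : (a + (m : ℝ) * c) * Real.sqrt δ ≤ |t| - |x| := by
        rw [htabs]
        have : (a + (m : ℝ) * c) * Real.sqrt δ = ((m : ℝ) + 1) * (c * Real.sqrt δ)
            - R * Real.sqrt δ := by rw [ha]; ring
        rw [this]
        linarith
      linarith
    have hamc : 0 ≤ a + (m : ℝ) * c := by positivity
    have hsq : ((a + (m : ℝ) * c) * Real.sqrt δ) ^ 2 ≤ (x + t) ^ 2 := by
      rw [← sq_abs (x + t)]
      exact pow_le_pow_left₀ (by positivity) h1 2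
    have hsq' : (a + (m : ℝ) * c) ^ 2 ≤ (x + t) ^ 2 / δ := by
      rw [le_div_iff₀ hδ]
      calc (a + (m : ℝ) * c) ^ 2 * δ = ((a + (m : ℝ) * c) * Real.sqrt δ) ^ 2 := by
            rw [mul_pow, hs2]
        _ ≤ (x + t) ^ 2 := hsq
    have hexp : -(x + t) ^ 2 / δ ≤ -(a ^ 2 + 2 * c * a * (m : ℝ)) := by
      have : a ^ 2 + 2 * c * a * (m : ℝ) ≤ (a + (m : ℝ) * c) ^ 2 := by nlinarith [sq_nonneg ((m : ℝ) * c)]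
      have h4 : a ^ 2 + 2 * c * a * (m : ℝ) ≤ (x + t) ^ 2 / δ := le_trans this hsq'
      have : -(x + t) ^ 2 / δ = -((x + t) ^ 2 / δ) := by ring
      rw [this]
      linarith
    calc Real.exp (-(x + t) ^ 2 / δ) ≤ Real.exp (-(a ^ 2 + 2 * c * a * (m : ℝ))) :=
          Real.exp_le_exp.mpr hexp
      _ = Real.exp (-a ^ 2) * r ^ m := by
          rw [hr, ← Real.exp_nat_mul, ← Real.exp_add]
          congr 1
          ring
  -- sum of the majorant
  have hgeo : HasSum (fun n : ℕ => Real.exp (-a ^ 2) * r ^ n)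
      (Real.exp (-a ^ 2) * (1 - r)⁻¹) :=
    (hasSum_geometric_of_lt_one hr0.le hr1).mul_left _
  have hTpos : HasSum (fun n : ℕ => G n) (Real.exp (-a ^ 2) * (1 - r)⁻¹) := by
    have heq : (fun n : ℕ => G (((n + 1 : ℕ) : ℤ))) = fun n : ℕ => Real.exp (-a ^ 2) * r ^ n := by
      funext n
      have h0 : (((n + 1 : ℕ)) : ℤ) ≠ 0 := by positivity
      have h2 : (((n + 1 : ℕ)) : ℤ).natAbs - 1 = n := by omega
      simp only [hG]
      rw [if_neg h0, h2]
    have h1 : HasSum (fun n : ℕ => G (((n + 1 : ℕ) : ℤ))) (Real.exp (-a ^ 2) * (1 - r)⁻¹) := by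
      rw [heq]; exact hgeo
    have := (hasSum_nat_add_iff (f := fun n : ℕ => G n) 1).mp h1
    simpa [hG] using this
  have hTneg : HasSum (fun n : ℕ => G (-(n + 1))) (Real.exp (-a ^ 2) * (1 - r)⁻¹) := by
    have heq : (fun n : ℕ => G (-((n : ℤ) + 1))) = fun n : ℕ => Real.exp (-a ^ 2) * r ^ n := by
      funext n
      have h0 : -((n : ℤ) + 1) ≠ 0 := by omega
      have h2 : (-((n : ℤ) + 1)).natAbs - 1 = n := by omega
      simp only [hG]
      rw [if_neg h0, h2]
    rw [heq]
    exact hgeo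
  have hGsum : HasSum G (2 * Real.exp (-a ^ 2) * (1 - r)⁻¹) := by
    have := hTpos.of_nat_of_neg_add_one hTneg
    convert this using 1
    ring
  -- indicator form
  have hind : ∑' n : {n : ℤ // n ≠ 0},
      Real.exp (-(x + 2 * Real.pi * (n : ℤ) * Real.sqrt δ / h) ^ 2 / δ) =
      ∑' n : ℤ, Set.indicator {n : ℤ | n ≠ 0}
        (fun n => Real.exp (-(x + 2 * Real.pi * (n : ℤ) * Real.sqrt δ / h) ^ 2 / δ)) n := by
    exact tsum_subtype {n : ℤ | n ≠ 0}
      (fun n : ℤ => Real.exp (-(x + 2 * Real.pi * (n : ℤ) * Real.sqrt δ / h) ^ 2 / δ))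
  have hle : ∀ n : ℤ, Set.indicator {n : ℤ | n ≠ 0}
      (fun n => Real.exp (-(x + 2 * Real.pi * (n : ℤ) * Real.sqrt δ / h) ^ 2 / δ)) n ≤ G n := by
    intro n
    by_cases hn : n = 0
    · simp [hn, hG]
    · rw [Set.indicator_of_mem (by simpa using hn)]
      simpa [hG, hn] using key n hn
  have hnn : ∀ n : ℤ, 0 ≤ Set.indicator {n : ℤ | n ≠ 0}
      (fun n => Real.exp (-(x + 2 * Real.pi * (n : ℤ) * Real.sqrt δ / h) ^ 2 / δ)) n := by
    intro n
    apply Set.indicator_nonneg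
    intro y _
    exact (Real.exp_pos _).le
  have hsummable : Summable (Set.indicator {n : ℤ | n ≠ 0}
      (fun n => Real.exp (-(x + 2 * Real.pi * (n : ℤ) * Real.sqrt δ / h) ^ 2 / δ))) :=
    Summable.of_nonneg_of_le hnn hle hGsum.summable
  rw [hind]
  calc ∑' n : ℤ, Set.indicator {n : ℤ | n ≠ 0}
        (fun n => Real.exp (-(x + 2 * Real.pi * (n : ℤ) * Real.sqrt δ / h) ^ 2 / δ)) n
      ≤ ∑' n : ℤ, G n := Summable.tsum_le_tsum hle hsummable hGsum.summable
    _ = 2 * Real.exp (-a ^ 2) * (1 - r)⁻¹ := hGsum.tsum_eq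
    _ = 2 * Real.exp (-(2 * Real.pi / h - R) ^ 2) /
        (1 - Real.exp (-(4 * Real.pi / h) * (2 * Real.pi / h - R))) := by
      rw [hr, ha, hc]
      rw [div_eq_mul_inv]
      congr 3
      ring
end

section
/- For δ > 0 and 0 < ε < 1, let n_p = ⌈√(log(1/ε))/(π√δ)⌉. Then for all real x, |∑_{m∈ℤ} e^{-(x+m)²/δ} − √(πδ) ∑_{n=-n_p}^{n_p} e^{-(π√δ n)²} e^{i2πnx}| ≤ 2√(πδ) e^{-(π√δ(n_p+1))²}/(1 − e^{-(π√δ)²(2n_p+3)}) and in particular this error is O(ε) (bounded by Cε for a constant C depending only on δ being bounded). -/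
/-!
Poisson summation turns the periodised Gaussian into `√(πδ)` times the Jacobi theta series
`θ(x, iπδ) = ∑ₙ e^{-(π√δ n)²} e^{2πinx}`, so the error is `√(πδ)` times the tail `|n| > n_p` of
that series. Pairing `n` with `-n`, the tail is dominated by the geometric series
`2 e^{-(p(n_p+1))²} ∑ⱼ e^{-p²(2n_p+3) j}` with `p = π√δ`, because
`(n_p+1+j)² ≥ (n_p+1)² + (2n_p+3) j`.
-/

open Real Complex Finset

theorem sum_Icc_neg_add_eq_sum_range {G : Type*} [AddCommMonoid G] (f : ℤ → G) (N : ℕ) :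
    ∑ n ∈ Icc (-(N : ℤ)) N, f n + f 0 = ∑ k ∈ range (N + 1), (f k + f (-k)) := by
  induction N with
  | zero => simp
  | succ N ih =>
    rw [sum_range_succ, ← ih, Nat.cast_succ, Finset.Icc_succ_succ, sum_union, sum_pair]
    · abel
    · omega
    · simp only [disjoint_iff_ne, mem_Icc, mem_insert, mem_singleton]; omega

theorem HasSum.sub_sum_Icc {G : Type*} [AddCommGroup G] [TopologicalSpace G]
    [IsTopologicalAddGroup G] {f : ℤ → G} {a : G} (hf : HasSum f a) (N : ℕ) :
    HasSum (fun j : ℕ ↦ f (j + (N + 1) : ℕ) + f (-(j + (N + 1) : ℕ)))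
      (a - ∑ n ∈ Icc (-(N : ℤ)) N, f n) := by
  have h := (hasSum_nat_add_iff' (N + 1)).2 hf.nat_add_neg
  rwa [← sum_Icc_neg_add_eq_sum_range, add_sub_add_right_eq_sub] at h

theorem exp_neg_sq_le_geometric (p : ℝ) (N j : ℕ) :
    rexp (-(p * (N + 1 + j)) ^ 2) ≤
      rexp (-(p * (N + 1)) ^ 2) * rexp (-p ^ 2 * (2 * N + 3)) ^ j := by
  rw [← Real.exp_nat_mul, ← Real.exp_add, Real.exp_le_exp]
  have hj : (j : ℝ) ≤ (j : ℝ) ^ 2 := by exact_mod_cast Nat.le_self_pow two_ne_zero j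
  nlinarith [mul_le_mul_of_nonneg_left hj (sq_nonneg p)]

theorem norm_sub_sum_Icc_le_of_norm_le_exp_neg_sq {E : Type*} [NormedAddCommGroup E]
    {f : ℤ → E} {a : E} (hf : HasSum f a) {p : ℝ} (hp : p ≠ 0)
    (hfp : ∀ n, ‖f n‖ ≤ rexp (-(p * n) ^ 2)) (N : ℕ) :
    ‖a - ∑ n ∈ Icc (-(N : ℤ)) N, f n‖ ≤
      2 * rexp (-(p * (N + 1)) ^ 2) / (1 - rexp (-p ^ 2 * (2 * N + 3))) := by
  set r := rexp (-p ^ 2 * (2 * N + 3))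
  have hr : r < 1 := by
    rw [Real.exp_lt_one_iff]
    have : 0 < p ^ 2 := by positivity
    nlinarith [(Nat.cast_nonneg N : (0 : ℝ) ≤ N)]
  have hgeom := ((hasSum_geometric_of_lt_one (Real.exp_pos _).le hr).mul_left
    (2 * rexp (-(p * (N + 1)) ^ 2)))
  rw [← div_eq_mul_inv] at hgeom
  refine (hf.sub_sum_Icc N).norm_le_of_bounded hgeom fun j ↦ ?_
  have hterm : ∀ n : ℤ, (n : ℝ) ^ 2 = (N + 1 + j) ^ 2 →
      ‖f n‖ ≤ rexp (-(p * (N + 1)) ^ 2) * r ^ j := fun n hn ↦ by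
    refine (hfp n).trans (le_of_eq_of_le ?_ (exp_neg_sq_le_geometric p N j))
    rw [mul_pow, hn, ← mul_pow]
  calc ‖f (j + (N + 1) : ℕ) + f (-(j + (N + 1) : ℕ))‖
      ≤ ‖f (j + (N + 1) : ℕ)‖ + ‖f (-(j + (N + 1) : ℕ))‖ := norm_add_le _ _
    _ ≤ _ := add_le_add (hterm _ (by push_cast; ring)) (hterm _ (by push_cast; ring))
    _ = _ := by ring

theorem jacobiTheta₂_term_I_mul_pi_mul (δ x : ℝ) (hδ : 0 ≤ δ) (n : ℤ) :
    jacobiTheta₂_term n x (I * π * δ) =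
      (rexp (-(π * √δ * n) ^ 2) : ℂ) * cexp (I * 2 * π * (n : ℝ) * x) := by
  have hsq : ((√δ : ℝ) : ℂ) ^ 2 = δ := by rw [← ofReal_pow, Real.sq_sqrt hδ]
  rw [jacobiTheta₂_term, ofReal_exp, ← Complex.exp_add]
  congr 1
  push_cast
  linear_combination (π : ℂ) ^ 2 * n ^ 2 * hsq + (π : ℂ) ^ 2 * n ^ 2 * δ * I_sq

theorem norm_jacobiTheta₂_term_I_mul_pi_mul (δ x : ℝ) (hδ : 0 ≤ δ) (n : ℤ) :
    ‖jacobiTheta₂_term n x (I * π * δ)‖ = rexp (-(π * √δ * n) ^ 2) := by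
  rw [norm_jacobiTheta₂_term]
  congr 1
  simp only [mul_im, I_re, I_im, ofReal_re, ofReal_im]
  rw [mul_pow, mul_pow, Real.sq_sqrt hδ]
  ring

theorem tsum_exp_neg_sq_div_eq_sqrt_mul_jacobiTheta₂ {δ : ℝ} (hδ : 0 < δ) (x : ℝ) :
    ∑' m : ℤ, (rexp (-(x + m) ^ 2 / δ) : ℂ) = √(π * δ) * jacobiTheta₂ x (I * π * δ) := by
  have hπδ : 0 < π * δ := mul_pos pi_pos hδ
  have hsqrt : ((π * δ : ℝ) : ℂ) ^ (1 / 2 : ℂ) = (√(π * δ) : ℝ) := by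
    rw [Real.sqrt_eq_rpow, ofReal_cpow hπδ.le]
    norm_num
  have poisson := Complex.tsum_exp_neg_quadratic (a := (π * δ : ℝ)) (by simpa using hπδ) (I * x)
  rw [hsqrt] at poisson
  have htheta : ∑' n : ℤ, cexp (-π * (π * δ : ℝ) * n ^ 2 + 2 * π * (I * x) * n) =
      jacobiTheta₂ x (I * π * δ) := by
    refine tsum_congr fun n ↦ ?_
    rw [jacobiTheta₂_term]
    congr 1
    push_cast
    linear_combination -(π : ℂ) ^ 2 * n ^ 2 * δ * I_sq
  have hgauss : ∑' n : ℤ, cexp (-π / (π * δ : ℝ) * (n + I * (I * x)) ^ 2) =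
      ∑' m : ℤ, (rexp (-(x + m) ^ 2 / δ) : ℂ) := by
    rw [← (Equiv.neg ℤ).tsum_eq]
    refine tsum_congr fun m ↦ ?_
    rw [Equiv.neg_apply, ofReal_exp, ← mul_assoc, I_mul_I]
    congr 1
    have : (π * δ : ℂ) ≠ 0 := mod_cast hπδ.ne'
    push_cast
    field_simp
    ring
  rw [htheta, hgauss] at poisson
  have hne : (√(π * δ) : ℂ) ≠ 0 := ofReal_ne_zero.2 (Real.sqrt_pos.2 hπδ).ne'
  rw [poisson, ← mul_assoc, mul_one_div_cancel hne, one_mul]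

open Complex in
theorem periodic_gaussian_truncation_general (δ x : ℝ) (np : ℕ)
    (hδ : 0 < δ) :
    ‖((∑' m : ℤ, (Real.exp (-(x + (m : ℝ)) ^ 2 / δ) : ℂ)) -
        (Real.sqrt (Real.pi * δ) : ℂ) *
          ∑ n ∈ Finset.Icc (-(np : ℤ)) (np : ℤ),
            (Real.exp (-(Real.pi * Real.sqrt δ * (n : ℝ)) ^ 2) : ℂ) *
              Complex.exp (Complex.I * 2 * Real.pi * (n : ℝ) * x))‖ ≤
      2 * Real.sqrt (Real.pi * δ) *
          Real.exp (-(Real.pi * Real.sqrt δ * ((np : ℝ) + 1)) ^ 2) /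
        (1 - Real.exp (-(Real.pi * Real.sqrt δ) ^ 2 * (2 * (np : ℝ) + 3))) := by
  have hθ : HasSum (jacobiTheta₂_term · x (I * π * δ)) (jacobiTheta₂ x (I * π * δ)) :=
    ((summable_jacobiTheta₂_term_iff _ _).2 (by simpa using mul_pos pi_pos hδ)).hasSum
  have htail := norm_sub_sum_Icc_le_of_norm_le_exp_neg_sq hθ
    (mul_pos pi_pos (Real.sqrt_pos.2 hδ)).ne'
    (fun n ↦ (norm_jacobiTheta₂_term_I_mul_pi_mul δ x hδ.le n).le) np
  simp_rw [← jacobiTheta₂_term_I_mul_pi_mul δ x hδ.le]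
  rw [tsum_exp_neg_sq_div_eq_sqrt_mul_jacobiTheta₂ hδ, ← mul_sub, norm_mul, norm_real,
    Real.norm_of_nonneg (Real.sqrt_nonneg _)]
  calc √(π * δ) * ‖jacobiTheta₂ x (I * π * δ) -
        ∑ n ∈ Icc (-(np : ℤ)) np, jacobiTheta₂_term n x (I * π * δ)‖
      ≤ √(π * δ) * (2 * rexp (-(π * √δ * (np + 1)) ^ 2) /
          (1 - rexp (-(π * √δ) ^ 2 * (2 * np + 3)))) :=
        mul_le_mul_of_nonneg_left htail (Real.sqrt_nonneg _)
    _ = _ := by ring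

open Complex in
/-- Truncation error of the Fourier series of the periodic Gaussian: with
`n_p = ⌈√(log(1/ε))/(π√δ)⌉`, for all real `x`,
`|∑_{m∈ℤ} e^{-(x+m)²/δ} - √(πδ) ∑_{n=-n_p}^{n_p} e^{-(π√δ n)²} e^{i2πnx}|
  ≤ 2√(πδ) e^{-(π√δ(n_p+1))²} / (1 - e^{-(π√δ)²(2n_p+3)})`. -/
theorem periodic_gaussian_truncation (δ ε x : ℝ) (np : ℕ)
    (hδ : 0 < δ) (hε1 : 0 < ε) (hε2 : ε < 1)
    (hnp : np = ⌈Real.sqrt (Real.log (1 / ε)) / (Real.pi * Real.sqrt δ)⌉₊) :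
    ‖((∑' m : ℤ, (Real.exp (-(x + (m : ℝ)) ^ 2 / δ) : ℂ)) -
        (Real.sqrt (Real.pi * δ) : ℂ) *
          ∑ n ∈ Finset.Icc (-(np : ℤ)) (np : ℤ),
            (Real.exp (-(Real.pi * Real.sqrt δ * (n : ℝ)) ^ 2) : ℂ) *
              Complex.exp (Complex.I * 2 * Real.pi * (n : ℝ) * x))‖ ≤
      2 * Real.sqrt (Real.pi * δ) *
          Real.exp (-(Real.pi * Real.sqrt δ * ((np : ℝ) + 1)) ^ 2) /
        (1 - Real.exp (-(Real.pi * Real.sqrt δ) ^ 2 * (2 * (np : ℝ) + 3))) :=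
  periodic_gaussian_truncation_general δ x np hδ
end

section
/- Let J_λ[P_n](t) = ∫_{-1}^{1} e^{-(t-x)²/λ²} P_n(x) dx, where P_n is the Legendre polynomial of degree n and λ > 0. Then for n ≥ 1, ((n+2)/(2n+3)) J_λ[P_{n+2}](t) = t(J_λ[P_{n+1}](t) − J_λ[P_{n-1}](t)) + ((n−1)/(2n−1)) J_λ[P_{n-2}](t) + (2n+1)(λ²/2 + 1/((2n+3)(2n−1))) J_λ[P_n](t). -/
/-- The Legendre polynomial of degree `n`, via the Rodrigues formula. -/
noncomputable def legendreP (n : ℕ) (x : ℝ) : ℝ :=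
  (1 / (2 ^ n * (n.factorial : ℝ))) * iteratedDeriv n (fun y : ℝ => (y ^ 2 - 1) ^ n) x

/-- Gaussian convolution of the Legendre polynomial on `[-1,1]`. -/
noncomputable def Jlam (lam : ℝ) (n : ℕ) (t : ℝ) : ℝ :=
  ∫ x in (-1 : ℝ)..1, Real.exp (-(t - x) ^ 2 / lam ^ 2) * legendreP n x

/-!
Write `Jλ[p](t)` for the Gaussian-weighted integral over `[-1,1]` of an arbitrary polynomial `p`;
it is linear in `p`. The recurrence comes from applying `Jλ` to two polynomial identities, the
three-term recurrence `(2n+1) X Pₙ = (n+1) Pₙ₊₁ + n Pₙ₋₁` (at `n + 1` and `n - 1`) and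
`(2n+1) Pₙ = P'ₙ₊₁ - P'ₙ₋₁`. For the latter, integration by parts moves the derivative onto the
Gaussian, whose derivative `2 (t - x) / λ² · e^{-(t-x)²/λ²}` produces the terms `t Jλ[P]` and
`Jλ[X P]`; the boundary terms cancel because `Pₙ₊₁` and `Pₙ₋₁` agree at `±1`. Both identities
follow from Rodrigues' formula, using `D((X² - 1)ⁿ⁺¹) = 2 (n+1) X (X² - 1)ⁿ` and the Leibniz rule.
-/

open Polynomial
open scoped Nat

section CommRing

variable {R : Type*} [CommRing R]

theorem derivative_X_sq_sub_one_pow_succ (n : ℕ) :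
    derivative (((X : R[X]) ^ 2 - 1) ^ (n + 1)) = C (2 * (n + 1) : R) * ((X ^ 2 - 1) ^ n * X) := by
  simp [derivative_pow, map_ofNat]
  ring

theorem iterate_derivative_X_sq_sub_one_pow_succ (n k : ℕ) :
    derivative^[k + 1] (((X : R[X]) ^ 2 - 1) ^ (n + 1)) =
      C (2 * (n + 1) : R) * (derivative^[k] ((X ^ 2 - 1) ^ n) * X +
        k • derivative^[k - 1] ((X ^ 2 - 1) ^ n)) := by
  rw [Function.iterate_succ_apply, derivative_X_sq_sub_one_pow_succ, iterate_derivative_C_mul,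
    iterate_derivative_mul_X]

theorem iterate_derivative_X_sq_sub_one_mul (n : ℕ) (q : R[X]) :
    derivative^[n + 1] ((X ^ 2 - 1) * q) =
      (X ^ 2 - 1) * derivative^[n + 1] q + 2 * ((n : R[X]) + 1) * X * derivative^[n] q +
        (n : R[X]) * ((n : R[X]) + 1) * derivative^[n - 1] q := by
  have h : (X ^ 2 - 1) * q = q * X * X - q := by ring
  simp only [h, iterate_derivative_sub, iterate_derivative_mul_X, add_tsub_cancel_right,
    nsmul_eq_mul, Nat.cast_add, Nat.cast_one]
  ring

end CommRing

section Legendre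

variable {K : Type*} [Field K]

noncomputable def legendre (n : ℕ) : K[X] :=
  C (2 ^ n * n ! : K)⁻¹ * derivative^[n] ((X ^ 2 - 1) ^ n)

theorem legendre_zero : (legendre 0 : K[X]) = 1 := by
  simp [legendre]

theorem derivative_legendre (n : ℕ) :
    derivative (legendre n : K[X]) =
      C (2 ^ n * n ! : K)⁻¹ * derivative^[n + 1] ((X ^ 2 - 1) ^ n) := by
  rw [legendre, derivative_C_mul, ← Function.iterate_succ_apply' derivative]

variable [CharZero K]

theorem inv_two_pow_mul_factorial_succ_mul (n : ℕ) :
    (2 ^ (n + 1) * (n + 1)! : K)⁻¹ * (2 * (n + 1)) = (2 ^ n * n ! : K)⁻¹ := by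
  rw [Nat.factorial_succ]
  push_cast
  field_simp
  ring

theorem legendre_one : (legendre 1 : K[X]) = X := by
  rw [legendre, iterate_derivative_X_sq_sub_one_pow_succ 0 0, ← mul_assoc, ← C_mul,
    inv_two_pow_mul_factorial_succ_mul]
  simp

theorem derivative_legendre_succ (n : ℕ) :
    derivative (legendre (n + 1) : K[X]) =
      X * derivative (legendre n) + ((n : K[X]) + 1) * legendre n := by
  rw [derivative_legendre, iterate_derivative_X_sq_sub_one_pow_succ, ← mul_assoc, ← C_mul,
    inv_two_pow_mul_factorial_succ_mul, derivative_legendre, legendre, add_tsub_cancel_right,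
    nsmul_eq_mul]
  push_cast
  ring

theorem add_one_mul_legendre_succ (n : ℕ) :
    ((n : K[X]) + 1) * legendre (n + 1) =
      ((n : K[X]) + 1) * (X * legendre n) + (X ^ 2 - 1) * derivative (legendre n) := by
  have h₁ := iterate_derivative_X_sq_sub_one_pow_succ (R := K) n n
  have h₂ := iterate_derivative_X_sq_sub_one_mul n (((X : K[X]) ^ 2 - 1) ^ n)
  have hc := congrArg C (inv_two_pow_mul_factorial_succ_mul (K := K) n)
  rw [← pow_succ' ((X : K[X]) ^ 2 - 1) n] at h₂
  rw [legendre, derivative_legendre, legendre]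
  simp only [map_mul, map_ofNat, map_add, map_natCast, map_one, nsmul_eq_mul] at h₁ hc
  -- `2 h₂ - h₁` eliminates `derivative^[n - 1] ((X ^ 2 - 1) ^ n)`
  linear_combination ((n : K[X]) + 1) * C (2 ^ (n + 1) * (n + 1)! : K)⁻¹ * (2 * h₂ - h₁)
    + ((X ^ 2 - 1) * derivative^[n + 1] ((X ^ 2 - 1) ^ n)
      + ((n : K[X]) + 1) * X * derivative^[n] ((X ^ 2 - 1) ^ n)) * hc

theorem legendre_add_two (n : ℕ) :
    ((n : K[X]) + 2) * legendre (n + 2) =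
      (2 * (n : K[X]) + 3) * (X * legendre (n + 1)) - ((n : K[X]) + 1) * legendre n := by
  have h := add_one_mul_legendre_succ (K := K) (n + 1)
  push_cast at h
  linear_combination h + (X ^ 2 - 1) * derivative_legendre_succ (K := K) n
    - X * add_one_mul_legendre_succ (K := K) n

theorem derivative_legendre_eq_X_mul_sub (n : ℕ) :
    derivative (legendre n : K[X]) =
      X * derivative (legendre (n + 1)) - ((n : K[X]) + 1) * legendre (n + 1) := by
  refine mul_left_cancel₀ (Nat.cast_add_one_ne_zero (R := K[X]) n) ?_
  have h := congrArg derivative (legendre_add_two (K := K) n)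
  have h' := derivative_legendre_succ (K := K) (n + 1)
  simp only [derivative_mul, derivative_sub, derivative_add, derivative_natCast, derivative_ofNat,
    derivative_X, derivative_one] at h
  push_cast at h'
  linear_combination h - ((n : K[X]) + 2) * h'

theorem derivative_legendre_add_two_sub (n : ℕ) :
    derivative (legendre (n + 2) : K[X]) - derivative (legendre n) =
      (2 * n + 3 : K) • legendre (n + 1) := by
  have h := derivative_legendre_succ (K := K) (n + 1)
  rw [smul_eq_C_mul]
  simp only [map_add, map_mul, map_ofNat, map_natCast]
  push_cast at h
  linear_combination h - derivative_legendre_eq_X_mul_sub (K := K) n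

-- At `n = 0` the last term vanishes, so the truncated `0 - 1 = 0` is harmless.
theorem legendre_mul_X (n : ℕ) :
    (2 * n + 1 : K) • (X * legendre n : K[X]) =
      (n + 1 : K) • legendre (n + 1) + (n : K) • legendre (n - 1) := by
  simp only [smul_eq_C_mul, map_add, map_mul, map_ofNat, map_natCast, map_one]
  cases n with
  | zero => simp [legendre_zero, legendre_one]
  | succ n =>
    push_cast
    linear_combination -legendre_add_two (K := K) n

theorem eval_legendre_of_sq_eq_one {s : K} (hs : s ^ 2 = 1) (n : ℕ) :
    (legendre n).eval s = s ^ n := by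
  induction n using Nat.twoStepInduction with
  | zero => simp [legendre_zero]
  | one => simp [legendre_one]
  | more n ih₀ ih₁ =>
    have h := congrArg (eval s) (legendre_add_two (K := K) n)
    simp only [eval_mul, eval_add, eval_sub, eval_natCast, eval_ofNat, eval_X, eval_one, ih₀,
      ih₁] at h
    refine mul_left_cancel₀ (by exact_mod_cast (n + 1).succ_ne_zero : (n : K) + 2 ≠ 0) ?_
    linear_combination h + ((n : K) + 1) * s ^ n * hs

end Legendre

theorem iteratedDeriv_eval {𝕜 : Type*} [NontriviallyNormedField 𝕜] (p : 𝕜[X]) (n : ℕ) :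
    iteratedDeriv n (fun x => p.eval x) = fun x => (derivative^[n] p).eval x := by
  induction n with
  | zero => simp
  | succ n ih =>
    ext x
    rw [iteratedDeriv_succ, ih, Polynomial.deriv, ← Function.iterate_succ_apply' derivative]

theorem legendreP_eq_eval (n : ℕ) (x : ℝ) : legendreP n x = (legendre n).eval x := by
  have h : (fun y : ℝ => (y ^ 2 - 1) ^ n) = fun y => (((X : ℝ[X]) ^ 2 - 1) ^ n).eval y := by
    simp
  rw [legendreP, h, iteratedDeriv_eval, legendre, eval_C_mul, one_div]

open Real intervalIntegral

theorem hasDerivAt_exp_neg_sq_div (lam t x : ℝ) :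
    HasDerivAt (fun y => exp (-(t - y) ^ 2 / lam ^ 2))
      (2 / lam ^ 2 * (t - x) * exp (-(t - x) ^ 2 / lam ^ 2)) x := by
  have h : HasDerivAt (fun y => -(t - y) ^ 2 / lam ^ 2) (2 / lam ^ 2 * (t - x)) x := by
    have h' : HasDerivAt (fun y => t - y) (-1) x := (hasDerivAt_id' x).const_sub t
    refine ((h'.pow 2).neg.div_const (lam ^ 2)).congr_deriv ?_
    ring
  convert h.exp using 1
  ring

theorem intervalIntegrable_exp_neg_sq_div_mul_eval (lam t a b : ℝ) (p : ℝ[X]) :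
    IntervalIntegrable (fun x => exp (-(t - x) ^ 2 / lam ^ 2) * p.eval x) MeasureTheory.volume a b :=
  Continuous.intervalIntegrable (by fun_prop) a b

noncomputable def gaussConv (lam t : ℝ) : ℝ[X] →ₗ[ℝ] ℝ where
  toFun p := ∫ x in (-1 : ℝ)..1, exp (-(t - x) ^ 2 / lam ^ 2) * p.eval x
  map_add' p q := by
    simp only [eval_add, mul_add]
    exact integral_add (intervalIntegrable_exp_neg_sq_div_mul_eval ..)
      (intervalIntegrable_exp_neg_sq_div_mul_eval ..)
  map_smul' c p := by
    simp only [eval_smul, smul_eq_mul, RingHom.id_apply, mul_left_comm _ c, integral_const_mul]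

theorem Jlam_eq_gaussConv (lam : ℝ) (n : ℕ) (t : ℝ) :
    Jlam lam n t = gaussConv lam t (legendre n) := by
  simp only [Jlam, gaussConv, LinearMap.coe_mk, AddHom.coe_mk, legendreP_eq_eval]

theorem gaussConv_derivative (lam t : ℝ) (p : ℝ[X]) :
    gaussConv lam t (derivative p) =
      exp (-(t - 1) ^ 2 / lam ^ 2) * p.eval 1 - exp (-(t + 1) ^ 2 / lam ^ 2) * p.eval (-1)
        - 2 / lam ^ 2 * (t * gaussConv lam t p - gaussConv lam t (X * p)) := by
  have h := integral_mul_deriv_eq_deriv_mul (a := -1) (b := 1)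
    (fun x _ => hasDerivAt_exp_neg_sq_div lam t x) (fun x _ => p.hasDerivAt x)
    (Continuous.intervalIntegrable (by fun_prop) _ _)
    ((derivative p).continuous.intervalIntegrable _ _)
  have hw (x : ℝ) : 2 / lam ^ 2 * (t - x) * exp (-(t - x) ^ 2 / lam ^ 2) * p.eval x =
      2 / lam ^ 2 * (t * (exp (-(t - x) ^ 2 / lam ^ 2) * p.eval x) -
        exp (-(t - x) ^ 2 / lam ^ 2) * (X * p).eval x) := by
    rw [eval_mul, eval_X]
    ring
  simp only [gaussConv, LinearMap.coe_mk, AddHom.coe_mk, h, hw, sub_neg_eq_add]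
  rw [integral_const_mul, integral_sub ((intervalIntegrable_exp_neg_sq_div_mul_eval ..).const_mul t)
    (intervalIntegrable_exp_neg_sq_div_mul_eval ..), integral_const_mul]

theorem gaussConv_legendre_succ {lam : ℝ} (hlam : lam ≠ 0) (t : ℝ) (n : ℕ) :
    lam ^ 2 / 2 * ((2 * n + 3) * gaussConv lam t (legendre (n + 1))) =
      gaussConv lam t (X * legendre (n + 2)) - gaussConv lam t (X * legendre n) -
        t * (gaussConv lam t (legendre (n + 2)) - gaussConv lam t (legendre n)) := by
  have hbd (s : ℝ) (hs : s ^ 2 = 1) : (legendre (n + 2)).eval s = (legendre n).eval s := by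
    rw [eval_legendre_of_sq_eq_one hs, eval_legendre_of_sq_eq_one hs, pow_add, hs, mul_one]
  have h := congrArg (gaussConv lam t) (derivative_legendre_add_two_sub (K := ℝ) n)
  rw [map_sub, gaussConv_derivative, gaussConv_derivative, hbd 1 (one_pow 2),
    hbd (-1) (by norm_num), map_smul, smul_eq_mul] at h
  rw [← h]
  field_simp
  ring

/-- Five-term recurrence for `J_λ[P_n]`. -/
theorem Jlam_five_term_recurrence (lam t : ℝ) (hlam : 0 < lam) (n : ℕ) (hn : 1 ≤ n) :
    ((n + 2 : ℝ) / (2 * n + 3)) * Jlam lam (n + 2) t =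
      t * (Jlam lam (n + 1) t - Jlam lam (n - 1) t) +
        ((n - 1 : ℝ) / (2 * n - 1)) * Jlam lam (n - 2) t +
        (2 * n + 1) * (lam ^ 2 / 2 + 1 / ((2 * n + 3) * (2 * n - 1))) * Jlam lam n t := by
  obtain ⟨m, rfl⟩ := Nat.exists_eq_add_of_le' hn
  have hderiv := gaussConv_legendre_succ hlam.ne' t m
  have hX₂ := congrArg (gaussConv lam t) (legendre_mul_X (K := ℝ) (m + 2))
  have hX₀ := congrArg (gaussConv lam t) (legendre_mul_X (K := ℝ) m)
  simp only [map_add, map_smul, smul_eq_mul] at hX₂ hX₀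
  simp only [Jlam_eq_gaussConv, show m + 1 - 1 = m from rfl, show m + 1 - 2 = m - 1 from rfl]
  push_cast at hX₂ ⊢
  rw [show (m + 1 - 1 : ℝ) = m by ring, show (2 * (m + 1) - 1 : ℝ) = 2 * m + 1 by ring]
  have h₁ : (2 * m + 1 : ℝ) ≠ 0 := by positivity
  field_simp
  linear_combination -2 * (2 * (m : ℝ) + 5) * (2 * m + 1) * hderiv - 2 * (2 * (m : ℝ) + 1) * hX₂
    + 2 * (2 * (m : ℝ) + 5) * hX₀
end
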